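/- (Feasibility-transfer step in the proof of Proposition 3.) Let A ∈ ℂ^{n×n} be Hermitian with a fixed decomposition A = A⁺ + A⁻ (A⁺ ⪰ 0, A⁻ ⪯ 0), let Z, V ∈ ℂ^{n×k}, C ∈ ℝ^{k×k} symmetric, t ∈ ℝ, and Λ ∈ ℝ^ℓ. If H_A(V, Z) − C + t·e₁e₁ᵀ − Σ_{j=1}^{ℓ} Λⱼ Wⱼ ⪯ 0, then also Vᴴ A V − C + t·e₁e₁ᵀ − Σ_{j=1}^{ℓ} Λⱼ Wⱼ ⪯ 0 (with real matrices coerced to complex). -/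

import Mathlib

open Matrix ComplexOrder

/-- The first standard basis vector `e₁ ∈ ℝ^k`. -/
def e1 (k : ℕ) [NeZero k] : Fin k → ℝ := Pi.single 0 1

/-- `H_A(V, Z) = Vᴴ A⁺ V + Zᴴ A⁻ V + Vᴴ A⁻ Z − Zᴴ A⁻ Z`. -/
noncomputable def Hmat {n k : ℕ} (Ap Am : Matrix (Fin n) (Fin n) ℂ)
    (V Z : Matrix (Fin n) (Fin k) ℂ) : Matrix (Fin k) (Fin k) ℂ :=
  Vᴴ * Ap * V + Zᴴ * Am * V + Vᴴ * Am * Z - Zᴴ * Am * Z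

theorem Matrix.PosSemidef.neg_sub_of_sub {m 𝕜 : Type*} [Fintype m] [RCLike 𝕜]
    {X Y R : Matrix m m 𝕜} (hXY : (Y - X).PosSemidef) (hY : (-(Y - R)).PosSemidef) :
    (-(X - R)).PosSemidef := by
  have hsplit : -(X - R) = -(Y - R) + (Y - X) := by abel
  rw [hsplit]
  exact hY.add hXY

theorem Hmat_sub_conjTranspose_mul_add_mul {n k : ℕ} (Ap Am : Matrix (Fin n) (Fin n) ℂ)
    (V Z : Matrix (Fin n) (Fin k) ℂ) :
    Hmat Ap Am V Z - Vᴴ * (Ap + Am) * V = (V - Z)ᴴ * (-Am) * (V - Z) := by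
  simp only [Hmat, conjTranspose_sub, Matrix.add_mul, Matrix.mul_add, Matrix.sub_mul,
    Matrix.mul_sub, Matrix.neg_mul, Matrix.mul_neg]
  abel

theorem posSemidef_Hmat_sub_conjTranspose_mul_add_mul {n k : ℕ}
    {Ap Am : Matrix (Fin n) (Fin n) ℂ} (hAm : (-Am).PosSemidef)
    (V Z : Matrix (Fin n) (Fin k) ℂ) :
    (Hmat Ap Am V Z - Vᴴ * (Ap + Am) * V).PosSemidef := by
  rw [Hmat_sub_conjTranspose_mul_add_mul]
  exact hAm.conjTranspose_mul_mul_same _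

theorem stmt7_general {n k ℓ : ℕ} [NeZero k]
    (W : Fin ℓ → Matrix (Fin k) (Fin k) ℝ)
    (A Ap Am : Matrix (Fin n) (Fin n) ℂ)
    (hAm : (-Am).PosSemidef) (hdec : A = Ap + Am)
    (Z V : Matrix (Fin n) (Fin k) ℂ)
    (C : Matrix (Fin k) (Fin k) ℝ)
    (t : ℝ) (Λ : Fin ℓ → ℝ)
    (h : (-(Hmat Ap Am V Z - C.map Complex.ofReal
        + ((t • vecMulVec (e1 k) (e1 k)).map Complex.ofReal)
        - ∑ j, ((Λ j • W j).map Complex.ofReal))).PosSemidef) :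
    (-(Vᴴ * A * V - C.map Complex.ofReal
        + ((t • vecMulVec (e1 k) (e1 k)).map Complex.ofReal)
        - ∑ j, ((Λ j • W j).map Complex.ofReal))).PosSemidef := by
  simp only [sub_add, sub_sub] at h ⊢
  rw [hdec]
  exact (posSemidef_Hmat_sub_conjTranspose_mul_add_mul hAm V Z).neg_sub_of_sub h

/-- **feasibility-transfer step in the proof of Proposition 3.** Let
`A ∈ ℂ^{n×n}` be Hermitian with a fixed decomposition `A = A⁺ + A⁻` (`A⁺ ⪰ 0`,
`A⁻ ⪯ 0`), let `Z, V ∈ ℂ^{n×k}`, `C ∈ ℝ^{k×k}` symmetric, `t ∈ ℝ`, and `Λ ∈ ℝ^ℓ`.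
If `H_A(V, Z) − C + t·e₁e₁ᵀ − Σⱼ Λⱼ Wⱼ ⪯ 0`, then also
`Vᴴ A V − C + t·e₁e₁ᵀ − Σⱼ Λⱼ Wⱼ ⪯ 0` (real matrices coerced to complex). -/
theorem stmt7 {n k ℓ : ℕ} [NeZero k]
    (W : Fin ℓ → Matrix (Fin k) (Fin k) ℝ) (hW : ∀ j, (W j).IsSymm)
    (A Ap Am : Matrix (Fin n) (Fin n) ℂ) (hA : A.IsHermitian)
    (hAp : Ap.PosSemidef) (hAm : (-Am).PosSemidef) (hdec : A = Ap + Am)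
    (Z V : Matrix (Fin n) (Fin k) ℂ)
    (C : Matrix (Fin k) (Fin k) ℝ) (hC : C.IsSymm)
    (t : ℝ) (Λ : Fin ℓ → ℝ)
    (h : (-(Hmat Ap Am V Z - C.map Complex.ofReal
        + ((t • vecMulVec (e1 k) (e1 k)).map Complex.ofReal)
        - ∑ j, ((Λ j • W j).map Complex.ofReal))).PosSemidef) :
    (-(Vᴴ * A * V - C.map Complex.ofReal
        + ((t • vecMulVec (e1 k) (e1 k)).map Complex.ofReal)
        - ∑ j, ((Λ j • W j).map Complex.ofReal))).PosSemidef :=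
  stmt7_general W A Ap Am hAm hdec Z V C t Λ h
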